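/- arXiv:0911.3608 — 5 statements merged into one kernel-verified Lean document; each statement's English description precedes it below -/
import Mathlib

section
/- Let (Ω, 𝒜, P) be a probability space on a standard Borel space, equipped with a filtration (ℱ_t)_{t ≥ 0}, and let 𝒢_0 ⊆ ℱ_0 be a sub-σ-algebra. Let X = (X_t)_{t ≥ 0} be a real-valued adapted process with X_0 = 0 such that for all 0 ≤ s ≤ t: (i) the increment X_t − X_s is conditionally independent of ℱ_s given 𝒢_0, and (ii) E[exp(X_t − X_s) | 𝒢_0] = 1 P-almost surely. Then (exp(X_t))_{t ≥ 0} is a martingale with respect to (ℱ_t) and P; in particular exp(X_t) is integrable with E[exp(X_t)] = 1 for every t ≥ 0. -/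
open MeasureTheory ProbabilityTheory
open scoped NNReal ENNReal

section Aux

variable {Ω : Type*} {m0 : MeasurableSpace Ω} [StandardBorelSpace Ω]
  {μ : Measure Ω} [IsProbabilityMeasure μ]

/-- Auxiliary computation: if `μ⟦t ∩ s | 𝒢₀⟧ =ᵐ μ⟦t | 𝒢₀⟧ * μ⟦s | 𝒢₀⟧`, then the set integral
of `μ⟦t | 𝒢₀⟧` over `s` equals `(μ (t ∩ s)).toReal`. -/
lemma setIntegral_condexp_indicator_of_mul
    {𝒢₀ : MeasurableSpace Ω} (h𝒢₀ : 𝒢₀ ≤ m0) {s t : Set Ω}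
    (ht : MeasurableSet[m0] t) (hs : MeasurableSet[m0] s)
    (h : μ[t.indicator (fun _ => (1 : ℝ)) | 𝒢₀] * μ[s.indicator (fun _ => (1 : ℝ)) | 𝒢₀]
      =ᵐ[μ] μ[(t ∩ s).indicator (fun _ => (1 : ℝ)) | 𝒢₀]) :
    ∫ x in s, (μ[t.indicator (fun _ => (1 : ℝ)) | 𝒢₀]) x ∂μ = (μ (t ∩ s)).toReal := by
  letI _inst : MeasurableSpace Ω := m0
  haveI : SigmaFinite (μ.trim h𝒢₀) := by infer_instance
  set g : Ω → ℝ := μ[t.indicator (fun _ => (1 : ℝ)) | 𝒢₀] with hg_def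
  have hg_int : Integrable g μ := integrable_condExp
  have hind_int : Integrable (s.indicator (fun _ => (1 : ℝ))) μ :=
    (integrable_const (1 : ℝ)).indicator hs
  have hprod_int : Integrable (g * s.indicator (fun _ => (1 : ℝ))) μ := by
    refine Integrable.mono' hg_int.abs ?_ ?_
    · exact ((stronglyMeasurable_condExp.mono h𝒢₀).mul
        ((stronglyMeasurable_const.indicator hs))).aestronglyMeasurable
    · refine Filter.Eventually.of_forall fun x => ?_
      simp only [Pi.mul_apply, norm_mul, Pi.abs_apply, Real.norm_eq_abs]
      by_cases hx : x ∈ s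
      · simp [Set.indicator_of_mem hx]
      · simp [Set.indicator_of_notMem hx, abs_nonneg]
  have h1 : ∫ x in s, g x ∂μ = ∫ x, (g * s.indicator (fun _ => (1 : ℝ))) x ∂μ := by
    rw [← integral_indicator hs]
    refine integral_congr_ae (Filter.Eventually.of_forall fun x => ?_)
    by_cases hx : x ∈ s
    · simp [Set.indicator_of_mem hx]
    · simp [Set.indicator_of_notMem hx]
  have h2 : ∫ x, (g * s.indicator (fun _ => (1 : ℝ))) x ∂μ
      = ∫ x, (μ[g * s.indicator (fun _ => (1 : ℝ)) | 𝒢₀]) x ∂μ :=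
    (integral_condExp h𝒢₀).symm
  have h3 : μ[g * s.indicator (fun _ => (1 : ℝ)) | 𝒢₀]
      =ᵐ[μ] g * μ[s.indicator (fun _ => (1 : ℝ)) | 𝒢₀] :=
    condExp_mul_of_stronglyMeasurable_left stronglyMeasurable_condExp hprod_int hind_int
  have h4 : ∫ x, (μ[g * s.indicator (fun _ => (1 : ℝ)) | 𝒢₀]) x ∂μ
      = ∫ x, (μ[(t ∩ s).indicator (fun _ => (1 : ℝ)) | 𝒢₀]) x ∂μ :=
    integral_congr_ae (h3.trans h)
  rw [h1, h2, h4, integral_condExp h𝒢₀, integral_indicator (ht.inter hs)]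
  simp [Measure.real]

/-- If `m₁` and `m₂` are conditionally independent given `𝒢₀ ≤ m₂` and `f` is an integrable
`m₁`-strongly measurable function, then `μ[f | m₂] =ᵐ[μ] μ[f | 𝒢₀]`. -/
lemma condexp_condIndep_eq
    {𝒢₀ m₁ m₂ : MeasurableSpace Ω} (h𝒢₀ : 𝒢₀ ≤ m0)
    (hm₁ : m₁ ≤ m0) (hm₂ : m₂ ≤ m0) (h𝒢₂ : 𝒢₀ ≤ m₂)
    (hci : CondIndep 𝒢₀ m₁ m₂ h𝒢₀ μ)
    {f : Ω → ℝ} (hf : StronglyMeasurable[m₁] f) (hfint : Integrable f μ) :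
    μ[f | m₂] =ᵐ[μ] μ[f | 𝒢₀] := by
  letI _inst : MeasurableSpace Ω := m0
  haveI : SigmaFinite (μ.trim hm₂) := by infer_instance
  haveI : SigmaFinite (μ.trim h𝒢₀) := by infer_instance
  have hci' := (condIndep_iff 𝒢₀ m₁ m₂ h𝒢₀ hm₁ hm₂ μ).mp hci
  refine (ae_eq_condExp_of_forall_setIntegral_eq hm₂ hfint
    (fun s _ _ => integrable_condExp.integrableOn) (fun s hms _ => ?_)
    (stronglyMeasurable_condExp.mono h𝒢₂).aestronglyMeasurable).symm
  -- goal : ∫ x in s, (μ[f|𝒢₀]) x ∂μ = ∫ x in s, f x ∂μ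
  rw [← memLp_one_iff_integrable] at hfint
  refine MemLp.induction_stronglyMeasurable hm₁ ENNReal.one_ne_top
    (fun f => ∫ x in s, (μ[f | 𝒢₀]) x ∂μ = ∫ x in s, f x ∂μ)
    ?_ ?_ ?_ ?_ hfint hf.aestronglyMeasurable
  · -- indicator case
    intro c t hmt _
    have h1 : t.indicator (fun _ => c) = c • t.indicator (fun _ => (1 : ℝ)) := by
      funext x; by_cases hx : x ∈ t <;> simp [hx]
    have hsmul : μ[c • t.indicator (fun _ => (1 : ℝ)) | 𝒢₀]
        =ᵐ[μ] c • μ[t.indicator (fun _ => (1 : ℝ)) | 𝒢₀] :=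
      condExp_smul c (t.indicator fun _ => (1 : ℝ)) 𝒢₀
    have key := setIntegral_condexp_indicator_of_mul h𝒢₀ (hm₁ t hmt) (hm₂ s hms)
      (hci' t s hmt hms).symm
    calc ∫ x in s, (μ[t.indicator (fun _ => c) | 𝒢₀]) x ∂μ
        = ∫ x in s, (c • μ[t.indicator (fun _ => (1 : ℝ)) | 𝒢₀]) x ∂μ := by
          rw [h1]; exact integral_congr_ae (ae_restrict_of_ae hsmul)
      _ = c * ∫ x in s, (μ[t.indicator (fun _ => (1 : ℝ)) | 𝒢₀]) x ∂μ := by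
          simp only [Pi.smul_apply, smul_eq_mul]
          exact integral_const_mul c _
      _ = c * (μ (t ∩ s)).toReal := by rw [key]
      _ = ∫ x in s, t.indicator (fun _ => c) x ∂μ := by
          rw [setIntegral_indicator (hm₁ t hmt), setIntegral_const, Set.inter_comm]
          simp [mul_comm, Measure.real]
  · -- additivity
    intro u v _ hu1 hv1 _ _ hPu hPv
    have hui := memLp_one_iff_integrable.mp hu1
    have hvi := memLp_one_iff_integrable.mp hv1
    calc ∫ x in s, (μ[u + v | 𝒢₀]) x ∂μ
        = ∫ x in s, ((μ[u | 𝒢₀]) + (μ[v | 𝒢₀])) x ∂μ :=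
          integral_congr_ae (ae_restrict_of_ae (condExp_add hui hvi 𝒢₀))
      _ = ∫ x in s, (μ[u | 𝒢₀]) x ∂μ + ∫ x in s, (μ[v | 𝒢₀]) x ∂μ :=
          integral_add integrable_condExp.integrableOn integrable_condExp.integrableOn
      _ = ∫ x in s, u x ∂μ + ∫ x in s, v x ∂μ := by rw [hPu, hPv]
      _ = ∫ x in s, (u + v) x ∂μ :=
          (integral_add hui.integrableOn hvi.integrableOn).symm
  · -- closedness
    have heq : ∀ g : lpMeas ℝ ℝ m₁ 1 μ,
        ∫ x in s, (μ[(g : Ω → ℝ) | 𝒢₀]) x ∂μ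
          = ∫ x in s, (condExpL1CLM ℝ h𝒢₀ μ (g : Lp ℝ 1 μ)) x ∂μ := by
      intro g
      refine integral_congr_ae (ae_restrict_of_ae ?_)
      have hgi : Integrable (g : Ω → ℝ) μ := L1.integrable_coeFn _
      have := condExp_ae_eq_condExpL1CLM (E := ℝ) h𝒢₀ hgi
      rwa [Integrable.toL1_coeFn _ hgi] at this
    have hset : {g : lpMeas ℝ ℝ m₁ 1 μ |
        ∫ x in s, (μ[(g : Ω → ℝ) | 𝒢₀]) x ∂μ = ∫ x in s, (g : Ω → ℝ) x ∂μ}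
        = {g : lpMeas ℝ ℝ m₁ 1 μ |
        ∫ x in s, (condExpL1CLM ℝ h𝒢₀ μ (g : Lp ℝ 1 μ)) x ∂μ
          = ∫ x in s, (g : Ω → ℝ) x ∂μ} := by
      ext g; simp only [Set.mem_setOf_eq, heq g]
    rw [show {g : lpMeas ℝ ℝ m₁ 1 μ |
        ∫ x in s, (μ[(g : Ω → ℝ) | 𝒢₀]) x ∂μ = ∫ x in s, (g : Ω → ℝ) x ∂μ} =
        {g : lpMeas ℝ ℝ m₁ 1 μ |
        ∫ x in s, (condExpL1CLM ℝ h𝒢₀ μ (g : Lp ℝ 1 μ)) x ∂μ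
          = ∫ x in s, (g : Ω → ℝ) x ∂μ} from hset]
    have hc1 : Continuous fun g : lpMeas ℝ ℝ m₁ 1 μ =>
        ∫ x in s, (condExpL1CLM ℝ h𝒢₀ μ (g : Lp ℝ 1 μ)) x ∂μ := by
      have : (fun g : lpMeas ℝ ℝ m₁ 1 μ =>
          ∫ x in s, (condExpL1CLM ℝ h𝒢₀ μ (g : Lp ℝ 1 μ)) x ∂μ)
          = (fun g : Lp ℝ 1 μ => ∫ x in s, g x ∂μ) ∘ (condExpL1CLM ℝ h𝒢₀ μ) ∘
            (Submodule.subtypeL (lpMeas ℝ ℝ m₁ 1 μ)) := rfl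
      rw [this]
      exact (continuous_setIntegral s).comp
        ((condExpL1CLM ℝ h𝒢₀ μ).continuous.comp (Submodule.subtypeL _).continuous)
    have hc2 : Continuous fun g : lpMeas ℝ ℝ m₁ 1 μ => ∫ x in s, (g : Ω → ℝ) x ∂μ := by
      have : (fun g : lpMeas ℝ ℝ m₁ 1 μ => ∫ x in s, (g : Ω → ℝ) x ∂μ)
          = (fun g : Lp ℝ 1 μ => ∫ x in s, g x ∂μ) ∘
            (Submodule.subtypeL (lpMeas ℝ ℝ m₁ 1 μ)) := rfl
      rw [this]
      exact (continuous_setIntegral s).comp (Submodule.subtypeL _).continuous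
    exact isClosed_eq hc1 hc2
  · -- ae congruence
    intro u v huv _ hPu
    calc ∫ x in s, (μ[v | 𝒢₀]) x ∂μ
        = ∫ x in s, (μ[u | 𝒢₀]) x ∂μ :=
          integral_congr_ae (ae_restrict_of_ae (condExp_congr_ae huv.symm))
      _ = ∫ x in s, u x ∂μ := hPu
      _ = ∫ x in s, v x ∂μ := integral_congr_ae (ae_restrict_of_ae huv)

end Aux

/-- If `X` is an adapted process with `X 0 = 0` whose increments `X t - X s` are
conditionally independent of `ℱ s` given a sub-σ-algebra `𝒢₀ ⊆ ℱ 0` and satisfy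
`E[exp (X t - X s) | 𝒢₀] = 1` a.s., then `exp ∘ X` is a martingale; in particular
each `exp (X t)` is integrable with expectation `1`. -/
theorem exp_martingale_of_condIndep_increments
    {Ω : Type*} {m0 : MeasurableSpace Ω} [StandardBorelSpace Ω]
    {μ : Measure Ω} [IsProbabilityMeasure μ]
    (ℱ : Filtration ℝ≥0 m0) (𝒢₀ : MeasurableSpace Ω)
    (h𝒢₀F : 𝒢₀ ≤ ℱ 0) (h𝒢₀ : 𝒢₀ ≤ m0)
    (X : ℝ≥0 → Ω → ℝ)
    (hadapted : Adapted ℱ X)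
    (hX0 : ∀ ω, X 0 ω = 0)
    (hindep : ∀ s t : ℝ≥0, s ≤ t →
      CondIndep 𝒢₀ (MeasurableSpace.comap (fun ω => X t ω - X s ω) inferInstance) (ℱ s) h𝒢₀ μ)
    (hexp : ∀ s t : ℝ≥0, s ≤ t →
      μ[fun ω => Real.exp (X t ω - X s ω) | 𝒢₀] =ᵐ[μ] fun _ => 1) :
    Martingale (fun t ω => Real.exp (X t ω)) ℱ μ ∧
      ∀ t : ℝ≥0, Integrable (fun ω => Real.exp (X t ω)) μ ∧
        ∫ ω, Real.exp (X t ω) ∂μ = 1 := by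
  letI _inst : MeasurableSpace Ω := m0
  haveI : (MeasureTheory.ae μ).NeBot :=
    MeasureTheory.ae_neBot.mpr (IsProbabilityMeasure.ne_zero μ)
  have hXmeas : ∀ t : ℝ≥0, Measurable (X t) :=
    fun t => (hadapted t).mono (ℱ.le t) le_rfl
  -- integrability of the increments' exponentials
  have hint : ∀ s t : ℝ≥0, s ≤ t →
      Integrable (fun ω => Real.exp (X t ω - X s ω)) μ := by
    intro s t hst
    by_contra h
    have h1 := hexp s t hst
    rw [condExp_of_not_integrable h] at h1
    obtain ⟨ω, hω⟩ := h1.exists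
    exact zero_ne_one hω
  -- integrability of exp (X t)
  have hintt : ∀ t : ℝ≥0, Integrable (fun ω => Real.exp (X t ω)) μ := by
    intro t
    refine (hint 0 t zero_le).congr
      (Filter.Eventually.of_forall fun ω => ?_)
    simp [hX0]
  -- conditional expectation of the increments given ℱ s
  have hcond : ∀ s t : ℝ≥0, s ≤ t →
      μ[(fun ω => Real.exp (X t ω - X s ω)) | ℱ s] =ᵐ[μ] fun _ => 1 := by
    intro s t hst
    have hY : Measurable (fun ω => X t ω - X s ω) := (hXmeas t).sub (hXmeas s)
    have hm₁ : MeasurableSpace.comap (fun ω => X t ω - X s ω) inferInstance ≤ m0 :=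
      hY.comap_le
    have h𝒢s : 𝒢₀ ≤ ℱ s := le_trans h𝒢₀F (ℱ.mono (zero_le (a := s)))
    have hYm : Measurable[MeasurableSpace.comap (fun ω => X t ω - X s ω) inferInstance]
        (fun ω => X t ω - X s ω) := measurable_iff_comap_le.mpr le_rfl
    have hsm : StronglyMeasurable[MeasurableSpace.comap
        (fun ω => X t ω - X s ω) inferInstance] (fun ω => Real.exp (X t ω - X s ω)) :=
      (Real.measurable_exp.comp hYm).stronglyMeasurable
    exact (condexp_condIndep_eq h𝒢₀ hm₁ (ℱ.le s) h𝒢s (hindep s t hst) hsm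
      (hint s t hst)).trans (hexp s t hst)
  constructor
  · constructor
    · exact fun t => Real.continuous_exp.comp_stronglyMeasurable (hadapted t).stronglyMeasurable
    · intro i j hij
      have key : (fun ω => Real.exp (X j ω))
          = (fun ω => Real.exp (X i ω)) * (fun ω => Real.exp (X j ω - X i ω)) := by
        funext ω
        simp only [Pi.mul_apply, ← Real.exp_add]
        ring_nf
      have hprod : Integrable
          ((fun ω => Real.exp (X i ω)) * fun ω => Real.exp (X j ω - X i ω)) μ := by
        rw [← key]; exact hintt j
      calc μ[(fun ω => Real.exp (X j ω)) | ℱ i]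
          = μ[(fun ω => Real.exp (X i ω)) * (fun ω => Real.exp (X j ω - X i ω)) | ℱ i] := by
            rw [← key]
        _ =ᵐ[μ] (fun ω => Real.exp (X i ω)) * μ[(fun ω => Real.exp (X j ω - X i ω)) | ℱ i] :=
            condExp_mul_of_stronglyMeasurable_left
              (Real.continuous_exp.comp_stronglyMeasurable (hadapted i).stronglyMeasurable)
              hprod (hint i j hij)
        _ =ᵐ[μ] fun ω => Real.exp (X i ω) := by
            filter_upwards [hcond i j hij] with ω hω
            simp [hω]
  · intro t
    refine ⟨hintt t, ?_⟩
    have h1 : ∫ ω, Real.exp (X t ω) ∂μ = ∫ ω, Real.exp (X t ω - X 0 ω) ∂μ := by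
      refine integral_congr_ae (Filter.Eventually.of_forall fun ω => ?_)
      simp [hX0]
    rw [h1, ← integral_condExp h𝒢₀, integral_congr_ae (hexp 0 t zero_le)]
    simp
end

section
/- Let p > 1, let b, c, π ∈ ℝ with c ≥ 0, let h(x) = x·1_{|x| ≤ 1} be the standard truncation function, and let K be a (nonnegative) Borel measure on ℝ such that K({x ∈ ℝ : 1 + πx ≤ 0}) = 0 and such that the functions x ↦ x(1 + πx)^{−p} − h(x) and x ↦ (1 + πx)^{1−p} − 1 − (1−p)π h(x) are K-integrable. Assume the first-order condition π·(b − p c π + ∫ (x(1 + πx)^{−p} − h(x)) K(dx)) ≥ 0 holds. Then the quantity C := (p−1)bπ + (p(1−p)/2) c π² − ∫ ((1 + πx)^{1−p} − 1 − (1−p)π h(x)) K(dx) is nonnegative. -/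
open MeasureTheory Real

lemma bernoulli_aux (p : ℝ) (hp : 1 < p) (a : ℝ) (ha : 0 < a) :
    a ^ (1 - p) ≤ 1 + (1 - p) * (a - 1) * a ^ (-p) := by
  have hB : 1 + p * (a - 1) ≤ (1 + (a - 1)) ^ p :=
    one_add_mul_self_le_rpow_one_add (by linarith) hp.le
  have h1 : a ^ (1 - p) = a * a ^ (-p) := by
    rw [show (1 : ℝ) - p = 1 + -p by ring, Real.rpow_add ha, Real.rpow_one]
  have h2 : 0 < a ^ (-p) := Real.rpow_pos_of_pos ha _
  have h3 : a ^ p * a ^ (-p) = 1 := by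
    rw [← Real.rpow_add ha]; simp
  have h4 : (1 + p * (a - 1)) * a ^ (-p) ≤ (1 + (a - 1)) ^ p * a ^ (-p) :=
    mul_le_mul_of_nonneg_right hB h2.le
  have h5 : (1 + (a - 1)) ^ p = a ^ p := by ring_nf
  rw [h5, h3] at h4
  rw [h1]
  nlinarith

/-- For `p > 1`, the first-order condition (Condition 3 of Corollary 4.1 with `η = 0`)
implies that the constant `C` in the exponential moment condition is nonnegative. -/
theorem constant_C_nonneg_of_first_order_condition
    (p b c pi : ℝ) (hp : 1 < p) (hc : 0 ≤ c)
    (K : Measure ℝ)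
    (h : ℝ → ℝ) (hdef : h = fun x => if |x| ≤ 1 then x else 0)
    (hsupp : K {x : ℝ | 1 + pi * x ≤ 0} = 0)
    (hint1 : Integrable (fun x => x * (1 + pi * x) ^ (-p) - h x) K)
    (hint2 : Integrable (fun x => (1 + pi * x) ^ (1 - p) - 1 - (1 - p) * pi * h x) K)
    (hfoc : 0 ≤ pi * (b - p * c * pi + ∫ x, (x * (1 + pi * x) ^ (-p) - h x) ∂K)) :
    0 ≤ (p - 1) * b * pi + (p * (1 - p) / 2) * c * pi ^ 2 -
      ∫ x, ((1 + pi * x) ^ (1 - p) - 1 - (1 - p) * pi * h x) ∂K := by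
  have hae : ∀ᵐ x ∂K, 0 < 1 + pi * x := by
    rw [ae_iff]
    convert hsupp using 2
    simp [not_lt]
  have key : 0 ≤ ∫ x, ((1 - p) * pi * (x * (1 + pi * x) ^ (-p) - h x) -
      ((1 + pi * x) ^ (1 - p) - 1 - (1 - p) * pi * h x)) ∂K := by
    refine integral_nonneg_of_ae ?_
    filter_upwards [hae] with x hx
    have hB := bernoulli_aux p hp (1 + pi * x) hx
    have h2 : (1 - p) * (1 + pi * x - 1) * (1 + pi * x) ^ (-p)
        = (1 - p) * pi * (x * (1 + pi * x) ^ (-p)) := by ring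
    rw [h2] at hB
    simp only [Pi.zero_apply]
    linarith
  have heq : ∫ x, ((1 - p) * pi * (x * (1 + pi * x) ^ (-p) - h x) -
      ((1 + pi * x) ^ (1 - p) - 1 - (1 - p) * pi * h x)) ∂K =
      (1 - p) * pi * (∫ x, (x * (1 + pi * x) ^ (-p) - h x) ∂K) -
      ∫ x, ((1 + pi * x) ^ (1 - p) - 1 - (1 - p) * pi * h x) ∂K := by
    rw [integral_sub (hint1.const_mul _) hint2, integral_const_mul]
  rw [heq] at key
  nlinarith [mul_nonneg (sub_pos.2 hp).le hfoc, mul_nonneg (mul_nonneg hc (sq_nonneg pi))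
    (mul_nonneg (sub_pos.2 hp).le (by linarith : (0:ℝ) ≤ p))]
end

section
/- Let λ > 0 and C < 0 be real numbers and set T_∞ := log(2)/λ. For t ≥ 0 define I(t) := ∫_{(1,∞)} exp(((e^{−λt} − 1)/λ)·C·z) · exp((C/(2λ))·z) · z^{−2} dz, where the integral is with respect to Lebesgue measure on (1, ∞). Then: (i) for every t with 0 ≤ t ≤ T_∞, I(t) ≤ 1; (ii) for every t > T_∞, I(t) = ∞. -/
open MeasureTheory Real
open scoped ENNReal

lemma lintegral_inv_sq_Ioi_one :
    ∫⁻ z in Set.Ioi (1:ℝ), ENNReal.ofReal (1 / z ^ 2) = 1 := by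
  have hcongr : ∫⁻ z in Set.Ioi (1:ℝ), ENNReal.ofReal (1 / z ^ 2)
      = ∫⁻ z in Set.Ioi (1:ℝ), ENNReal.ofReal (z ^ (-2 : ℝ)) := by
    refine setLIntegral_congr_fun measurableSet_Ioi ?_
    intro z hz
    have hz0 : (0:ℝ) < z := lt_trans one_pos hz
    beta_reduce
    rw [Real.rpow_neg hz0.le, Real.rpow_two]
    simp [one_div]
  rw [hcongr]
  have hint : IntegrableOn (fun z : ℝ => z ^ (-2 : ℝ)) (Set.Ioi 1) :=
    integrableOn_Ioi_rpow_of_lt (by norm_num) one_pos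
  have hval : ∫ z in Set.Ioi (1:ℝ), z ^ (-2 : ℝ) = 1 := by
    rw [integral_Ioi_rpow_of_lt (by norm_num) one_pos]; norm_num
  have hnn : 0 ≤ᵐ[volume.restrict (Set.Ioi (1:ℝ))] fun z : ℝ => z ^ (-2 : ℝ) := by
    filter_upwards [ae_restrict_mem measurableSet_Ioi] with z hz
    exact Real.rpow_nonneg (by linarith [Set.mem_Ioi.mp hz]) _
  rw [← ofReal_integral_eq_lintegral_ofReal hint hnn, hval, ENNReal.ofReal_one]

/-- Sudden explosion of the exponential moment integral (Example 4.1): for `C < 0` the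
integral `I t = ∫_{(1,∞)} exp(((e^{-λt}-1)/λ) C z) exp((C/(2λ)) z) z⁻² dz` is at most `1`
for `t ≤ log 2 / λ` and infinite for `t > log 2 / λ`. -/
theorem sudden_explosion_of_exponential_moment
    (lam C : ℝ) (hlam : 0 < lam) (hC : C < 0)
    (Tinf : ℝ) (hTinf : Tinf = Real.log 2 / lam)
    (I : ℝ → ℝ≥0∞)
    (hI : I = fun t => ∫⁻ z in Set.Ioi (1 : ℝ),
      ENNReal.ofReal (Real.exp (((Real.exp (-lam * t) - 1) / lam) * C * z) *
        Real.exp ((C / (2 * lam)) * z) / z ^ 2)) :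
    (∀ t : ℝ, 0 ≤ t → t ≤ Tinf → I t ≤ 1) ∧ (∀ t : ℝ, Tinf < t → I t = ∞) := by
  subst hI hTinf
  set b : ℝ → ℝ := fun t => (Real.exp (-lam * t) - 1) / lam * C + C / (2 * lam) with hb
  have hbform : ∀ t, b t = C / lam * (Real.exp (-lam * t) - 1 / 2) := by
    intro t
    rw [hb]
    field_simp
    ring
  have hexp : ∀ t z : ℝ,
      Real.exp ((Real.exp (-lam * t) - 1) / lam * C * z) * Real.exp (C / (2 * lam) * z)
        = Real.exp (b t * z) := by
    intro t z
    rw [← Real.exp_add, hb]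
    ring_nf
  constructor
  · intro t _ht0 htle
    calc (∫⁻ z in Set.Ioi (1 : ℝ),
        ENNReal.ofReal (Real.exp ((Real.exp (-lam * t) - 1) / lam * C * z) *
          Real.exp (C / (2 * lam) * z) / z ^ 2))
        ≤ ∫⁻ z in Set.Ioi (1 : ℝ), ENNReal.ofReal (1 / z ^ 2) := by
          refine setLIntegral_mono (by measurability) ?_
          intro z hz
          have hz1 : (1:ℝ) < z := hz
          have hz0 : (0:ℝ) < z := lt_trans one_pos hz1
          refine ENNReal.ofReal_le_ofReal ?_
          rw [hexp t z]
          have hbt : b t ≤ 0 := by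
            rw [hbform]
            have h1 : lam * t ≤ Real.log 2 := by
              rw [le_div_iff₀ hlam] at htle
              linarith
            have h2 : (1:ℝ) / 2 ≤ Real.exp (-(lam * t)) := by
              rw [← Real.exp_log (by norm_num : (0:ℝ) < 1/2)]
              apply Real.exp_le_exp.mpr
              rw [Real.log_div one_ne_zero two_ne_zero, Real.log_one]
              linarith
            rw [neg_mul]
            have hCl : C / lam ≤ 0 := div_nonpos_of_nonpos_of_nonneg hC.le hlam.le
            nlinarith
          have hle1 : Real.exp (b t * z) ≤ 1 :=
            Real.exp_le_one_iff.mpr (mul_nonpos_of_nonpos_of_nonneg hbt hz0.le)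
          gcongr
    _ = 1 := lintegral_inv_sq_Ioi_one
  · intro t hgt
    have hbt : 0 < b t := by
      rw [hbform]
      have h1 : Real.log 2 < lam * t := by
        rw [div_lt_iff₀ hlam] at hgt
        linarith
      have h2 : Real.exp (-(lam * t)) < 1 / 2 := by
        rw [← Real.exp_log (by norm_num : (0:ℝ) < 1/2)]
        apply Real.exp_lt_exp.mpr
        rw [Real.log_div one_ne_zero two_ne_zero, Real.log_one]
        linarith
      have hCl : C / lam < 0 := div_neg_of_neg_of_pos hC hlam
      rw [neg_mul]
      nlinarith
    set a := b t with ha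
    clear_value a
    have hlow : ∀ z ∈ Set.Ioi (1:ℝ),
        ENNReal.ofReal (a ^ 3 / 27) ≤
          ENNReal.ofReal (Real.exp ((Real.exp (-lam * t) - 1) / lam * C * z) *
            Real.exp (C / (2 * lam) * z) / z ^ 2) := by
      intro z hz
      have hz1 : (1:ℝ) < z := hz
      have hz0 : (0:ℝ) < z := lt_trans one_pos hz1
      refine ENNReal.ofReal_le_ofReal ?_
      rw [hexp t z, ← ha]
      have hcube : a ^ 3 * z ^ 3 / 27 ≤ Real.exp (a * z) := by
        have h1 : a * z / 3 ≤ Real.exp (a * z / 3) :=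
          le_trans (by linarith) (Real.add_one_le_exp (a * z / 3))
        have h2 : (a * z / 3) ^ 3 ≤ Real.exp (a * z / 3) ^ 3 := by
          apply pow_le_pow_left₀ (by positivity) h1
        calc a ^ 3 * z ^ 3 / 27 = (a * z / 3) ^ 3 := by ring
          _ ≤ Real.exp (a * z / 3) ^ 3 := h2
          _ = Real.exp (a * z) := by
            rw [← Real.exp_nat_mul]
            congr 1
            push_cast
            ring
      rw [le_div_iff₀ (by positivity)]
      have h4 : a ^ 3 / 27 * z ^ 2 ≤ a ^ 3 * z ^ 3 / 27 := by
        have h5 : a ^ 3 * z ^ 2 * 1 ≤ a ^ 3 * z ^ 2 * z :=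
          mul_le_mul_of_nonneg_left hz1.le (mul_nonneg (pow_pos hbt 3).le (sq_nonneg z))
        nlinarith [h5]
      linarith
    have hconst : (∞ : ℝ≥0∞) = ∫⁻ _ in Set.Ioi (1:ℝ), ENNReal.ofReal (a ^ 3 / 27) := by
      rw [setLIntegral_const, Real.volume_Ioi, ENNReal.mul_top]
      simp only [ne_eq, ENNReal.ofReal_eq_zero, not_le]
      positivity
    rw [eq_top_iff, hconst]
    exact setLIntegral_mono (ENNReal.measurable_ofReal.comp (by fun_prop)) hlow
end

section
/- Let λ > 0, C < 0, y_0 ≥ 0, and 0 < T ≤ log(2)/λ. Define ᾱ(s) := C·(e^{−λ(T−s)} − 1)/λ for s ∈ [0, T]. Then ∫_0^T ∫_{(1,∞)} (exp(ᾱ(s)·z) − 1) · exp((C/(2λ))·z) · z^{−2} dz ds + ᾱ(0)·y_0 ≤ log(2)/λ + (−C)·y_0/(2λ), where the inner integral is with respect to Lebesgue measure on (1, ∞). In particular, the left-hand side is finite. -/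
open MeasureTheory Real
open scoped ENNReal

lemma inner_int_one : (∫⁻ z in Set.Ioi (1 : ℝ), ENNReal.ofReal (1 / z ^ 2)) = 1 := by
  have hint : IntegrableOn (fun z : ℝ => 1 / z ^ 2) (Set.Ioi (1 : ℝ)) := by
    refine (integrableOn_Ioi_rpow_of_lt (by norm_num : (-2 : ℝ) < -1) zero_lt_one).congr_fun
      (fun x hx => ?_) measurableSet_Ioi
    have hx0 : (0 : ℝ) < x := zero_lt_one.trans hx
    dsimp only; rw [show (-2 : ℝ) = -(2 : ℕ) by norm_num, Real.rpow_neg hx0.le, Real.rpow_natCast, one_div]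
  have hval : (∫ z in Set.Ioi (1 : ℝ), 1 / z ^ 2) = 1 := by
    have h := integral_Ioi_rpow_of_lt (by norm_num : (-2 : ℝ) < -1) zero_lt_one
    rw [show (∫ z in Set.Ioi (1 : ℝ), 1 / z ^ 2) = ∫ z in Set.Ioi (1 : ℝ), z ^ (-2 : ℝ) from
      setIntegral_congr_fun measurableSet_Ioi fun x hx => by
        have hx0 : (0 : ℝ) < x := zero_lt_one.trans hx
        rw [show (-2 : ℝ) = -(2 : ℕ) by norm_num, Real.rpow_neg hx0.le, Real.rpow_natCast,
          one_div],
      h]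
    norm_num
  rw [← ofReal_integral_eq_lintegral_ofReal hint
    (Filter.Eventually.of_forall fun x => by positivity), hval, ENNReal.ofReal_one]

/-- Uniform bound on (the log of) the maximal expected utility in Example 4.1 for
time horizons `T ≤ log 2 / λ`. -/
theorem maximal_expected_utility_bounded
    (lam C y0 T : ℝ) (hlam : 0 < lam) (hC : C < 0) (hy0 : 0 ≤ y0)
    (hT : 0 < T) (hTle : T ≤ Real.log 2 / lam)
    (alp : ℝ → ℝ) (halp : alp = fun s => C * (Real.exp (-lam * (T - s)) - 1) / lam) :
    (∫⁻ s in Set.Ioc (0 : ℝ) T,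
        (∫⁻ z in Set.Ioi (1 : ℝ),
          ENNReal.ofReal ((Real.exp (alp s * z) - 1) *
            Real.exp ((C / (2 * lam)) * z) / z ^ 2))) +
      ENNReal.ofReal (alp 0 * y0) ≤
    ENNReal.ofReal (Real.log 2 / lam + (-C) * y0 / (2 * lam)) := by
  have hlog2 : (0 : ℝ) < Real.log 2 := Real.log_pos one_lt_two
  have hTlam : lam * T ≤ Real.log 2 := by
    rw [mul_comm]; exact (le_div_iff₀ hlam).mp hTle
  -- key: for 0 ≤ s ≤ T, alp s + C/(2*lam) ≤ 0
  have hkey : ∀ s : ℝ, 0 ≤ s → s ≤ T → alp s + C / (2 * lam) ≤ 0 := by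
    intro s hs hsT
    have hexp : (1 : ℝ) / 2 ≤ Real.exp (-lam * (T - s)) := by
      have h1 : -Real.log 2 ≤ -lam * (T - s) := by nlinarith [mul_nonneg hlam.le hs]
      calc (1 : ℝ) / 2 = Real.exp (-Real.log 2) := by
            rw [Real.exp_neg, Real.exp_log two_pos]; norm_num
        _ ≤ Real.exp (-lam * (T - s)) := Real.exp_le_exp.mpr h1
    have heq : alp s + C / (2 * lam) =
        C * (Real.exp (-lam * (T - s)) - 1 / 2) / lam := by
      rw [halp]; field_simp; ring
    rw [heq]
    apply div_nonpos_of_nonpos_of_nonneg _ hlam.le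
    nlinarith
  have halp_nonneg : ∀ s : ℝ, s ≤ T → 0 ≤ alp s := by
    intro s hsT
    rw [halp]
    have : Real.exp (-lam * (T - s)) ≤ 1 :=
      Real.exp_le_one_iff.mpr (by nlinarith)
    apply div_nonneg _ hlam.le
    nlinarith
  -- inner integral bound
  have hinner : ∀ s ∈ Set.Ioc (0 : ℝ) T,
      (∫⁻ z in Set.Ioi (1 : ℝ),
        ENNReal.ofReal ((Real.exp (alp s * z) - 1) *
          Real.exp ((C / (2 * lam)) * z) / z ^ 2)) ≤ 1 := by
    intro s hs
    have hac := hkey s hs.1.le hs.2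
    calc (∫⁻ z in Set.Ioi (1 : ℝ),
          ENNReal.ofReal ((Real.exp (alp s * z) - 1) *
            Real.exp ((C / (2 * lam)) * z) / z ^ 2))
        ≤ ∫⁻ z in Set.Ioi (1 : ℝ), ENNReal.ofReal (1 / z ^ 2) := by
          refine setLIntegral_mono (by measurability) fun z hz => ?_
          have hz1 : (1 : ℝ) < z := hz
          have hz0 : (0 : ℝ) < z := zero_lt_one.trans hz1
          apply ENNReal.ofReal_le_ofReal
          have hnum : (Real.exp (alp s * z) - 1) * Real.exp ((C / (2 * lam)) * z) ≤ 1 := by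
            have hprod : (Real.exp (alp s * z) - 1) * Real.exp ((C / (2 * lam)) * z) =
                Real.exp ((alp s + C / (2 * lam)) * z) - Real.exp ((C / (2 * lam)) * z) := by
              rw [sub_mul, ← Real.exp_add]; ring_nf
            have h1 : Real.exp ((alp s + C / (2 * lam)) * z) ≤ 1 :=
              Real.exp_le_one_iff.mpr (mul_nonpos_of_nonpos_of_nonneg hac hz0.le)
            have h2 : (0 : ℝ) < Real.exp ((C / (2 * lam)) * z) := Real.exp_pos _
            rw [hprod]; linarith
          rw [div_le_div_iff_of_pos_right (by positivity : (0:ℝ) < z ^ 2)]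
          exact hnum
      _ = 1 := inner_int_one
  -- outer integral bound
  have houter : (∫⁻ s in Set.Ioc (0 : ℝ) T,
      (∫⁻ z in Set.Ioi (1 : ℝ),
        ENNReal.ofReal ((Real.exp (alp s * z) - 1) *
          Real.exp ((C / (2 * lam)) * z) / z ^ 2))) ≤ ENNReal.ofReal T := by
    calc (∫⁻ s in Set.Ioc (0 : ℝ) T, _)
        ≤ ∫⁻ _ in Set.Ioc (0 : ℝ) T, (1 : ℝ≥0∞) :=
          setLIntegral_mono measurable_const hinner
      _ = volume (Set.Ioc (0 : ℝ) T) := setLIntegral_one _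
      _ = ENNReal.ofReal T := by rw [Real.volume_Ioc, sub_zero]
  -- second summand
  have hsnd : alp 0 * y0 ≤ (-C) * y0 / (2 * lam) := by
    have h0 : alp 0 ≤ -C / (2 * lam) := by
      have := hkey 0 le_rfl hT.le; rw [neg_div]; linarith
    calc alp 0 * y0 ≤ (-C / (2 * lam)) * y0 :=
          mul_le_mul_of_nonneg_right h0 hy0
      _ = (-C) * y0 / (2 * lam) := by ring
  calc (∫⁻ s in Set.Ioc (0 : ℝ) T, _) + ENNReal.ofReal (alp 0 * y0)
      ≤ ENNReal.ofReal T + ENNReal.ofReal ((-C) * y0 / (2 * lam)) :=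
        add_le_add houter (ENNReal.ofReal_le_ofReal hsnd)
    _ ≤ ENNReal.ofReal (Real.log 2 / lam) + ENNReal.ofReal ((-C) * y0 / (2 * lam)) :=
        add_le_add_left (ENNReal.ofReal_le_ofReal hTle) _
    _ = ENNReal.ofReal (Real.log 2 / lam + (-C) * y0 / (2 * lam)) := by
        rw [ENNReal.ofReal_add (by positivity) (div_nonneg (mul_nonneg (by linarith) hy0) (by positivity))]
end

section
/- Let (Ω, 𝒜, P) be a probability space, 𝒢 ⊆ 𝒜 a sub-σ-algebra, p > 0 with p ≠ 1, and define the power utility function u(x) = x^{1−p}/(1−p) for x > 0. Let A, B : Ω → ℝ be random variables with A > 0 and B > 0 almost surely, such that A^{1−p}, B^{1−p} and A^{−p}·B are integrable, and suppose that E[A^{−p}·B | 𝒢] ≤ E[A^{1−p} | 𝒢] P-almost surely. Then E[u(B) | 𝒢] ≤ E[u(A) | 𝒢] P-almost surely; in particular, E[u(B)] ≤ E[u(A)]. -/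
open MeasureTheory Real

/-- Tangent-line inequality for negative exponents. -/
lemma tangent_rpow_neg {q t : ℝ} (hq : q < 0) (ht : 0 < t) :
    1 + q * (t - 1) ≤ t ^ q := by
  have h1 : t ^ q = Real.exp (Real.log t * q) := Real.rpow_def_of_pos ht q
  have h2 : Real.log t ≤ t - 1 := Real.log_le_sub_one_of_pos ht
  have h3 : q * (t - 1) ≤ q * Real.log t := by nlinarith
  calc 1 + q * (t - 1) ≤ 1 + Real.log t * q := by nlinarith
    _ ≤ Real.exp (Real.log t * q) := by
        simpa [add_comm] using Real.add_one_le_exp (Real.log t * q)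
    _ = t ^ q := h1.symm

/-- Concavity tangent inequality for the power utility. -/
lemma power_utility_tangent {p x y : ℝ} (hp : 0 < p) (hp1 : p ≠ 1)
    (hx : 0 < x) (hy : 0 < y) :
    y ^ (1 - p) / (1 - p) ≤ x ^ (1 - p) / (1 - p) + (x ^ (-p) * y - x ^ (1 - p)) := by
  set t := y / x with htdef
  have ht : 0 < t := div_pos hy hx
  have hty : y = x * t := by rw [htdef]; field_simp
  have hxt : x ^ (-p) * y = x ^ (1 - p) * t := by
    rw [hty, show (1 : ℝ) - p = 1 + (-p) by ring, Real.rpow_add hx, Real.rpow_one]; ring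
  have hyt : y ^ (1 - p) = x ^ (1 - p) * t ^ (1 - p) := by
    rw [hty, Real.mul_rpow hx.le ht.le]
  have hxp : 0 < x ^ (1 - p) := Real.rpow_pos_of_pos hx _
  have hmain : t ^ (1 - p) / (1 - p) ≤ 1 / (1 - p) + (t - 1) := by
    rcases lt_or_gt_of_ne hp1 with h | h
    · have h1p : (0 : ℝ) < 1 - p := by linarith
      have hb : t ^ (1 - p) ≤ 1 + (1 - p) * (t - 1) := by
        have h0 := rpow_one_add_le_one_add_mul_self (s := t - 1)
          (by linarith) (p := 1 - p) (by linarith) (by linarith)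
        rwa [show 1 + (t - 1) = t by ring] at h0
      rw [div_le_iff₀ h1p]
      have heq : (1 / (1 - p) + (t - 1)) * (1 - p) = 1 + (1 - p) * (t - 1) := by
        field_simp
      rw [heq]; exact hb
    · have h1p : (1 : ℝ) - p < 0 := by linarith
      have hne : (1 : ℝ) - p ≠ 0 := ne_of_lt h1p
      have hb : 1 + (1 - p) * (t - 1) ≤ t ^ (1 - p) := tangent_rpow_neg h1p ht
      rw [div_le_iff_of_neg h1p]
      have heq : (1 / (1 - p) + (t - 1)) * (1 - p) = 1 + (1 - p) * (t - 1) := by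
        rw [add_mul, one_div_mul_cancel hne]; ring
      rw [heq]; exact hb
  calc y ^ (1 - p) / (1 - p) = x ^ (1 - p) * (t ^ (1 - p) / (1 - p)) := by rw [hyt]; ring
    _ ≤ x ^ (1 - p) * (1 / (1 - p) + (t - 1)) :=
        mul_le_mul_of_nonneg_left hmain hxp.le
    _ = x ^ (1 - p) / (1 - p) + (x ^ (1 - p) * t - x ^ (1 - p)) := by ring
    _ = x ^ (1 - p) / (1 - p) + (x ^ (-p) * y - x ^ (1 - p)) := by rw [hxt]

/-- Abstract verification lemma (Step 6 of the proof of Theorem 3.1): if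
`E[A ^ (-p) * B | 𝒢] ≤ E[A ^ (1 - p) | 𝒢]` a.s. for positive random variables `A, B`,
then the power utility of `B` is dominated by that of `A`, conditionally and in
expectation. -/
theorem power_utility_verification_lemma
    {Ω : Type*} {m0 : MeasurableSpace Ω} {μ : Measure Ω} [IsProbabilityMeasure μ]
    (𝒢 : MeasurableSpace Ω) (h𝒢 : 𝒢 ≤ m0)
    (p : ℝ) (hp : 0 < p) (hp1 : p ≠ 1)
    (u : ℝ → ℝ) (hu : u = fun x => x ^ (1 - p) / (1 - p))
    (A B : Ω → ℝ)
    (hA : ∀ᵐ ω ∂μ, 0 < A ω) (hB : ∀ᵐ ω ∂μ, 0 < B ω)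
    (hintA : Integrable (fun ω => A ω ^ (1 - p)) μ)
    (hintB : Integrable (fun ω => B ω ^ (1 - p)) μ)
    (hintAB : Integrable (fun ω => A ω ^ (-p) * B ω) μ)
    (hcond : μ[fun ω => A ω ^ (-p) * B ω | 𝒢] ≤ᵐ[μ] μ[fun ω => A ω ^ (1 - p) | 𝒢]) :
    (μ[fun ω => u (B ω) | 𝒢] ≤ᵐ[μ] μ[fun ω => u (A ω) | 𝒢]) ∧
      ∫ ω, u (B ω) ∂μ ≤ ∫ ω, u (A ω) ∂μ := by
  subst hu
  -- integrability of utilities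
  have hintuA : Integrable (fun ω => A ω ^ (1 - p) / (1 - p)) μ := hintA.div_const _
  have hintuB : Integrable (fun ω => B ω ^ (1 - p) / (1 - p)) μ := hintB.div_const _
  -- the dominating function
  have hinth : Integrable
      (fun ω => A ω ^ (1 - p) / (1 - p) + (A ω ^ (-p) * B ω - A ω ^ (1 - p))) μ :=
    hintuA.add (hintAB.sub hintA)
  -- pointwise tangent inequality
  have hpt : (fun ω => B ω ^ (1 - p) / (1 - p)) ≤ᵐ[μ]
      fun ω => A ω ^ (1 - p) / (1 - p) + (A ω ^ (-p) * B ω - A ω ^ (1 - p)) := by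
    filter_upwards [hA, hB] with ω hAω hBω
    exact power_utility_tangent hp hp1 hAω hBω
  constructor
  · -- conditional inequality
    have h1 : μ[fun ω => B ω ^ (1 - p) / (1 - p) | 𝒢] ≤ᵐ[μ]
        μ[fun ω => A ω ^ (1 - p) / (1 - p) + (A ω ^ (-p) * B ω - A ω ^ (1 - p)) | 𝒢] :=
      condExp_mono hintuB hinth hpt
    have h2 : μ[fun ω => A ω ^ (1 - p) / (1 - p) + (A ω ^ (-p) * B ω - A ω ^ (1 - p)) | 𝒢]
        =ᵐ[μ] μ[fun ω => A ω ^ (1 - p) / (1 - p) | 𝒢]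
          + (μ[fun ω => A ω ^ (-p) * B ω | 𝒢] - μ[fun ω => A ω ^ (1 - p) | 𝒢]) := by
      refine (condExp_add hintuA (hintAB.sub hintA) (m := 𝒢)).trans ?_
      filter_upwards [condExp_sub hintAB hintA (m := 𝒢)] with ω hω
      simp [hω]
    refine h1.trans (h2.le.trans ?_)
    filter_upwards [hcond] with ω hω
    simp only [Pi.add_apply, Pi.sub_apply]
    linarith
  · -- integral inequality
    have hA1 : ∫ ω, A ω ^ (-p) * B ω ∂μ ≤ ∫ ω, A ω ^ (1 - p) ∂μ := by
      have := integral_mono_ae integrable_condExp integrable_condExp hcond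
      rwa [integral_condExp h𝒢, integral_condExp h𝒢] at this
    have h3 : ∫ ω, B ω ^ (1 - p) / (1 - p) ∂μ ≤
        ∫ ω, (A ω ^ (1 - p) / (1 - p) + (A ω ^ (-p) * B ω - A ω ^ (1 - p))) ∂μ :=
      integral_mono_ae hintuB hinth hpt
    have hsub : Integrable (fun ω => A ω ^ (-p) * B ω - A ω ^ (1 - p)) μ :=
      hintAB.sub hintA
    have h4 : ∫ ω, (A ω ^ (1 - p) / (1 - p) + (A ω ^ (-p) * B ω - A ω ^ (1 - p))) ∂μ
        = ∫ ω, A ω ^ (1 - p) / (1 - p) ∂μ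
          + (∫ ω, A ω ^ (-p) * B ω ∂μ - ∫ ω, A ω ^ (1 - p) ∂μ) := by
      rw [integral_add hintuA hsub, integral_sub hintAB hintA]
    show ∫ ω, B ω ^ (1 - p) / (1 - p) ∂μ ≤ ∫ ω, A ω ^ (1 - p) / (1 - p) ∂μ
    linarith
end
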